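/- arXiv:1502.08026 — 3 statements merged into one kernel-verified Lean document; each statement's English description precedes it below -/
import Mathlib

section
/- Let K be a differential field of characteristic 0 and let F be a differential field extension of K whose field of constants equals the field of constants C of K. Let C̄ be an algebraic closure of C contained in a differential field extension of F. Then the field extensions C̄|C and F|C are linearly disjoint over C; in particular, any C-basis {α_i}_{i∈I} of C̄ is also an F-basis of the compositum F·C̄. -/
/-!
Common setup: differential fields realized as subfields of an ambient field `M`
of characteristic zero equipped with a derivation `D`.
-/

namespace PVGalois

variable {M : Type*} [Field M]

/-- `D` is a derivation on the field `M`. -/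
structure IsDerivation (D : M → M) : Prop where
  map_add : ∀ a b : M, D (a + b) = D a + D b
  leibniz : ∀ a b : M, D (a * b) = a * D b + D a * b

/-- A subfield `F` of `M` is a differential subfield if it is closed under `D`. -/
def DiffClosed (D : M → M) (F : Subfield M) : Prop :=
  ∀ x ∈ F, D x ∈ F

/-- The set of constants of the differential subfield `F`. -/
def constantsOf (D : M → M) (F : Subfield M) : Set M :=
  {x | x ∈ F ∧ D x = 0}

/-- `L` is differentially generated over `K` by the set `S`:
`L` is the smallest differential subfield containing `K` and `S`. -/
def IsDiffGenBy (D : M → M) (K : Subfield M) (S : Set M) (L : Subfield M) : Prop :=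
  K ≤ L ∧ S ⊆ (L : Set M) ∧ DiffClosed D L ∧
    ∀ F : Subfield M, K ≤ F → S ⊆ (F : Set M) → DiffClosed D F → L ≤ F

/-- `y` is a solution of the homogeneous linear differential equation
`Y⁽ⁿ⁾ + a_{n-1} Y⁽ⁿ⁻¹⁾ + ⋯ + a_1 Y' + a_0 Y = 0`. -/
def IsSolution (D : M → M) (n : ℕ) (a : Fin n → M) (y : M) : Prop :=
  D^[n] y + ∑ i : Fin n, a i * D^[(i : ℕ)] y = 0

/-- A family `v` is linearly independent over the set of scalars `A ⊆ M`. -/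
def LinIndepOver {ι : Type*} (A : Set M) (v : ι → M) : Prop :=
  ∀ (s : Finset ι) (c : ι → M), (∀ i, c i ∈ A) →
    ∑ i ∈ s, c i * v i = 0 → ∀ i ∈ s, c i = 0

/-- Every element of `T` is a finite linear combination of the family `v`
with coefficients in `A`. -/
def SpansOver {ι : Type*} (A : Set M) (v : ι → M) (T : Set M) : Prop :=
  ∀ x ∈ T, ∃ (s : Finset ι) (c : ι → M), (∀ i, c i ∈ A) ∧ x = ∑ i ∈ s, c i * v i

/-- `Cb` is an algebraic closure of the set `C` inside `M`:
it contains `C`, is algebraic over `C`, and is algebraically closed. -/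
def IsAlgClosureOf (C : Set M) (Cb : Subfield M) : Prop :=
  C ⊆ (Cb : Set M) ∧
  (∀ x ∈ Cb, ∃ p : Polynomial M, p ≠ 0 ∧ (∀ k, p.coeff k ∈ C) ∧ p.eval x = 0) ∧
  (∀ p : Polynomial M, 0 < p.degree → (∀ k, p.coeff k ∈ Cb) → ∃ x ∈ Cb, p.eval x = 0)

/-- `L|K` is a Picard-Vessiot extension for the equation with coefficients `a`,
with fundamental system of solutions `η`. -/
def IsPicardVessiotWith (D : M → M) (K L : Subfield M) (n : ℕ) (a : Fin n → M)
    (η : Fin n → M) : Prop :=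
  (∀ i, a i ∈ K) ∧ (∀ j, IsSolution D n a (η j)) ∧
  LinIndepOver (constantsOf D L) η ∧
  IsDiffGenBy D K (Set.range η) L ∧
  constantsOf D L = constantsOf D K

/-- `L|K` is a Picard-Vessiot extension for the equation with coefficients `a`. -/
def IsPicardVessiot (D : M → M) (K L : Subfield M) (n : ℕ) (a : Fin n → M) : Prop :=
  ∃ η : Fin n → M, IsPicardVessiotWith D K L n a η

/-- A `K`-differential morphism from `L` into `Lb`: a ring homomorphism defined on `L`
with values in `Lb`, fixing `K` pointwise and commuting with the derivation `D`. -/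
def IsDiffHom (D : M → M) (K L Lb : Subfield M) (σ : ↥L →+* M) : Prop :=
  (∀ x, σ x ∈ Lb) ∧ (∀ x : ↥L, (x : M) ∈ K → σ x = (x : M)) ∧
  ∀ (x : M) (hx : x ∈ L) (hx' : D x ∈ L), σ ⟨D x, hx'⟩ = D (σ ⟨x, hx⟩)

/-- A `Kb`-differential automorphism of `Lb`: a `Kb`-differential morphism of `Lb`
into itself which is onto `Lb`. -/
def IsDiffAut (D : M → M) (Kb Lb : Subfield M) (τ : ↥Lb →+* M) : Prop :=
  IsDiffHom D Kb Lb Lb τ ∧ ∀ y ∈ Lb, ∃ x : ↥Lb, τ x = y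

end PVGalois

open PVGalois

/-!
Elements of `Cb` are roots of nonzero polynomials with constant coefficients, hence constants:
differentiating `p(x) = 0` gives `p'(x) x' = 0`, and if `p'(x) = 0` one passes to `p'`, of smaller
degree and nonzero in characteristic zero. Given an `F`-linear relation among constants with a
coefficient normalized to `1`, differentiating it yields a shorter relation, so by induction the
normalized coefficients are constants of `F`, i.e. lie in `C`. Finally `Cb` is algebraic over `F`,
so `F ⊔ Cb` is the ring `F[Cb]`, which is the `F`-span of the multiplicatively closed set `Cb`.
-/

namespace PVGalois

open Polynomial

variable {M : Type*} [Field M] {D : M → M}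

namespace IsDerivation

def toDerivation (hD : IsDerivation D) : Derivation ℤ M M where
  toLinearMap := (AddMonoidHom.mk' D hD.map_add).toIntLinearMap
  map_one_eq_zero' := by
    have h := hD.leibniz 1 1
    simp only [mul_one, one_mul] at h
    exact left_eq_add.mp h
  leibniz' a b := by
    change D (a * b) = a * D b + b * D a
    rw [hD.leibniz, mul_comm (D a)]

theorem toDerivation_apply (hD : IsDerivation D) (x : M) : hD.toDerivation x = D x := rfl

theorem map_zero (hD : IsDerivation D) : D 0 = 0 := hD.toDerivation.map_zero

theorem map_one (hD : IsDerivation D) : D 1 = 0 := hD.toDerivation.map_one_eq_zero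

theorem map_sum (hD : IsDerivation D) {ι : Type*} (s : Finset ι) (f : ι → M) :
    D (∑ i ∈ s, f i) = ∑ i ∈ s, D (f i) :=
  _root_.map_sum hD.toDerivation f s

theorem apply_eval (hD : IsDerivation D) {p : M[X]} (hp : ∀ k, D (p.coeff k) = 0) (x : M) :
    D (p.eval x) = p.derivative.eval x * D x := by
  have hmap : hD.toDerivation.mapCoeffs p = 0 :=
    PolynomialModule.ext (Finsupp.ext fun k => by simpa [toDerivation_apply] using hp k)
  simpa [hmap, toDerivation_apply] using hD.toDerivation.apply_eval_eq x p

theorem apply_coeff_derivative (hD : IsDerivation D) {p : M[X]} (hp : ∀ k, D (p.coeff k) = 0)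
    (k : ℕ) : D (p.derivative.coeff k) = 0 := by
  have hk : D ((k + 1 : ℕ) : M) = 0 := hD.toDerivation.map_natCast (k + 1)
  rw [coeff_derivative, hD.leibniz, hp, ← Nat.cast_succ, hk, mul_zero, zero_mul, add_zero]

theorem apply_eq_zero_of_eval_eq_zero [CharZero M] (hD : IsDerivation D) {p : M[X]}
    (hp0 : p ≠ 0) (hp : ∀ k, D (p.coeff k) = 0) {x : M} (hx : p.eval x = 0) : D x = 0 := by
  induction hn : p.natDegree using Nat.strong_induction_on generalizing p with
  | _ n ih =>
    have hdeg : p.natDegree ≠ 0 := by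
      intro h
      rw [eq_C_of_natDegree_eq_zero h, eval_C] at hx
      exact hp0 (by rw [eq_C_of_natDegree_eq_zero h, hx, C_0])
    by_cases hder : p.derivative.eval x = 0
    · exact ih _ (hn ▸ natDegree_derivative_lt hdeg) (mt derivative_eq_zero.mp hdeg)
        (hD.apply_coeff_derivative hp) hder rfl
    · have h := hD.apply_eval hp x
      rw [hx, hD.map_zero] at h
      exact (mul_eq_zero.mp h.symm).resolve_left hder

theorem sum_apply_mul_eq_zero (hD : IsDerivation D) {ι : Type*} {s : Finset ι}
    {c v : ι → M} (hv : ∀ i, D (v i) = 0) (hsum : ∑ i ∈ s, c i * v i = 0) :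
    ∑ i ∈ s, D (c i) * v i = 0 := by
  have h := congrArg D hsum
  rw [hD.map_sum, hD.map_zero] at h
  simpa only [hD.leibniz, hv, mul_zero, zero_add] using h

end IsDerivation

theorem isAlgebraic_of_eval_eq_zero (F : Subfield M) {p : M[X]} (hp0 : p ≠ 0)
    (hp : ∀ k, p.coeff k ∈ F) {x : M} (hx : p.eval x = 0) : IsAlgebraic F x := by
  obtain ⟨q, rfl⟩ : p ∈ lifts (algebraMap F M) :=
    (lifts_iff_coeff_lifts p).mpr fun k => ⟨⟨_, hp k⟩, rfl⟩
  exact ⟨q, fun hq => hp0 (by simp [hq]), by rwa [aeval_def, eval₂_eq_eval_map]⟩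

namespace IsAlgClosureOf

variable {C : Set M} {Cb : Subfield M}

theorem isAlgebraic {F : Subfield M} (hCb : IsAlgClosureOf C Cb) (hCF : C ⊆ F) {x : M}
    (hx : x ∈ Cb) : IsAlgebraic F x := by
  obtain ⟨p, hp0, hpC, hpx⟩ := hCb.2.1 x hx
  exact isAlgebraic_of_eval_eq_zero F hp0 (fun k => hCF (hpC k)) hpx

theorem apply_eq_zero [CharZero M] (hD : IsDerivation D) {K : Subfield M}
    (hCb : IsAlgClosureOf (constantsOf D K) Cb) {x : M} (hx : x ∈ Cb) : D x = 0 := by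
  obtain ⟨p, hp0, hpC, hpx⟩ := hCb.2.1 x hx
  exact hD.apply_eq_zero_of_eval_eq_zero hp0 (fun k => (hpC k).2) hpx

end IsAlgClosureOf

theorem linIndepOver_of_constantsOf (hD : IsDerivation D) {F : Subfield M}
    (hF : DiffClosed D F) {ι : Type*} {v : ι → M} (hv : ∀ i, D (v i) = 0)
    (hind : LinIndepOver (constantsOf D F) v) : LinIndepOver (F : Set M) v := by
  classical
  intro s
  induction s using Finset.strongInduction with
  | _ s ih =>
    intro c hcF hsum
    by_contra! ⟨j, hjs, hcj⟩
    set d : ι → M := fun i => if i ∈ s then c i / c j else 0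
    have hdF : ∀ i, d i ∈ F := fun i => by
      by_cases hi : i ∈ s <;> simp [d, hi, div_mem (hcF i) (hcF j)]
    have hdj : d j = 1 := by simp [d, hjs, hcj]
    have hdsum : ∑ i ∈ s, d i * v i = 0 :=
      calc ∑ i ∈ s, d i * v i = (∑ i ∈ s, c i * v i) / c j := by
            rw [Finset.sum_div]
            exact Finset.sum_congr rfl fun i hi => by simp [d, hi, div_mul_eq_mul_div]
        _ = 0 := by rw [hsum, zero_div]
    have hDd : ∀ i ∈ s, D (d i) = 0 := by
      have hDsum := hD.sum_apply_mul_eq_zero hv hdsum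
      rw [← Finset.add_sum_erase s _ hjs, hdj, hD.map_one, zero_mul, zero_add] at hDsum
      have hrest := ih (s.erase j) (Finset.erase_ssubset hjs) (fun i => D (d i))
        (fun i => hF _ (hdF i)) hDsum
      intro i hi
      rcases eq_or_ne i j with rfl | hij
      · rw [hdj, hD.map_one]
      · exact hrest i (Finset.mem_erase.mpr ⟨hij, hi⟩)
    have hdC : ∀ i, d i ∈ constantsOf D F := fun i => by
      by_cases hi : i ∈ s
      · exact ⟨hdF i, hDd i hi⟩
      · simpa [d, hi] using ⟨zero_mem F, hD.map_zero⟩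
    exact one_ne_zero (hdj ▸ hind s d hdC hdsum j hjs)

theorem IsAlgClosureOf.linIndepOver [CharZero M] (hD : IsDerivation D) {K F Cb : Subfield M}
    (hF : DiffClosed D F) (hconst : constantsOf D F = constantsOf D K)
    (hCb : IsAlgClosureOf (constantsOf D K) Cb) {ι : Type*} {v : ι → M} (hv : ∀ i, v i ∈ Cb)
    (hind : LinIndepOver (constantsOf D K) v) : LinIndepOver (F : Set M) v :=
  linIndepOver_of_constantsOf hD hF (fun i => hCb.apply_eq_zero hD (hv i)) (hconst ▸ hind)

theorem SpansOver.mono {A B : Set M} (hAB : A ⊆ B) {ι : Type*} {α : ι → M} {T : Set M}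
    (h : SpansOver A α T) : SpansOver B α T := fun x hx => by
  obtain ⟨s, c, hc, rfl⟩ := h x hx
  exact ⟨s, c, fun i => hAB (hc i), rfl⟩

theorem spansOver_iff_subset_span (F : Subfield M) {ι : Type*} (α : ι → M) (T : Set M) :
    SpansOver (F : Set M) α T ↔ T ⊆ Submodule.span F (Set.range α) := by
  constructor
  · intro h x hx
    obtain ⟨s, c, hc, rfl⟩ := h x hx
    exact Submodule.sum_mem _ fun i _ =>
      Submodule.smul_mem _ (⟨c i, hc i⟩ : F) (Submodule.subset_span ⟨i, rfl⟩)
  · intro h x hx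
    obtain ⟨c, rfl⟩ := Finsupp.mem_span_range_iff_exists_finsupp.mp (h hx)
    exact ⟨c.support, fun i => c i, fun i => (c i).2, rfl⟩

theorem spansOver_sup_of_isAlgebraic {F Cb : Subfield M} (halg : ∀ x ∈ Cb, IsAlgebraic F x)
    {ι : Type*} {α : ι → M} (hspan : SpansOver (F : Set M) α Cb) :
    SpansOver (F : Set M) α (F ⊔ Cb : Subfield M) := by
  rw [spansOver_iff_subset_span] at hspan ⊢
  have hsup : F ⊔ Cb ≤ (IntermediateField.adjoin F (Cb : Set M)).toSubfield :=
    sup_le (fun y hy => (IntermediateField.adjoin F (Cb : Set M)).algebraMap_mem ⟨y, hy⟩)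
      (IntermediateField.subset_adjoin F _)
  have hadj : Subalgebra.toSubmodule (Algebra.adjoin F (Cb : Set M)) ≤
      Submodule.span F (Set.range α) :=
    (Algebra.adjoin_toSubmodule_le F).mpr
      fun y hy => hspan (Submonoid.closure_le (S := Cb.toSubmonoid).mpr le_rfl hy)
  intro x hx
  have hx' : x ∈ (IntermediateField.adjoin F (Cb : Set M)).toSubalgebra := hsup hx
  rw [IntermediateField.adjoin_toSubalgebra_of_isAlgebraic halg] at hx'
  exact hadj hx'

end PVGalois

theorem statement_0_general {M : Type*} [Field M] [CharZero M] (D : M → M) (hD : IsDerivation D)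
    (K F : Subfield M) (hFdc : DiffClosed D F)
    (hconst : constantsOf D F = constantsOf D K)
    (Cb : Subfield M) (hCb : IsAlgClosureOf (constantsOf D K) Cb)
    {ι' : Type*} (β : ι' → M) (hβmem : ∀ i, β i ∈ Cb)
    (hβind : LinIndepOver (constantsOf D K) β)
    {ι : Type*} (α : ι → M) (hαmem : ∀ i, α i ∈ Cb)
    (hαind : LinIndepOver (constantsOf D K) α)
    (hαspan : SpansOver (constantsOf D K) α (Cb : Set M)) :
    LinIndepOver (F : Set M) β ∧
    LinIndepOver (F : Set M) α ∧
    SpansOver (F : Set M) α ((F ⊔ Cb : Subfield M) : Set M) := by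
  have hCF : constantsOf D K ⊆ (F : Set M) := hconst ▸ fun _ hx => hx.1
  exact ⟨hCb.linIndepOver hD hFdc hconst hβmem hβind,
    hCb.linIndepOver hD hFdc hconst hαmem hαind,
    spansOver_sup_of_isAlgebraic (fun _ hx => hCb.isAlgebraic hCF hx) (hαspan.mono hCF)⟩

/-- If `F|K` is a differential field extension with the same constants
`C` as `K`, and `Cb` is an algebraic closure of `C`, then `Cb|C` and `F|C` are linearly
disjoint over `C`: every family of elements of `Cb` which is linearly independent over `C`
remains linearly independent over `F`.  In particular a `C`-basis `α` of `Cb` is an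
`F`-basis of the compositum `F ⊔ Cb`. -/
theorem statement_0 {M : Type*} [Field M] [CharZero M] (D : M → M) (hD : IsDerivation D)
    (K F : Subfield M) (hKdc : DiffClosed D K) (hFdc : DiffClosed D F) (hKF : K ≤ F)
    (hconst : constantsOf D F = constantsOf D K)
    (Cb : Subfield M) (hCb : IsAlgClosureOf (constantsOf D K) Cb)
    {ι' : Type*} (β : ι' → M) (hβmem : ∀ i, β i ∈ Cb)
    (hβind : LinIndepOver (constantsOf D K) β)
    {ι : Type*} (α : ι → M) (hαmem : ∀ i, α i ∈ Cb)
    (hαind : LinIndepOver (constantsOf D K) α)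
    (hαspan : SpansOver (constantsOf D K) α (Cb : Set M)) :
    LinIndepOver (F : Set M) β ∧
    LinIndepOver (F : Set M) α ∧
    SpansOver (F : Set M) α ((F ⊔ Cb : Subfield M) : Set M) :=
  statement_0_general D hD K F hFdc hconst Cb hCb β hβmem hβind α hαmem hαind hαspan
end

section
/- Let K be a differential field of characteristic 0 with field of constants C, L|K a Picard-Vessiot extension for the equation L(Y)=0, C̄ an algebraic closure of C, and L̄ = L·C̄, K̄ = K·C̄. Then L̄|K̄ is a Picard-Vessiot extension for the same equation L(Y)=0 (viewed over K̄): L̄ is differentially generated over K̄ by a fundamental system of solutions of L(Y)=0, and the field of constants of L̄ equals the field of constants C̄ of K̄. -/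
open PVGalois

open Polynomial

namespace PVGalois

variable {M : Type*} [Field M]

theorem IsDerivation.exists_derivation {D : M → M} (hD : IsDerivation D) :
    ∃ d : Derivation ℤ M M, ⇑d = D :=
  ⟨Derivation.mk' (AddMonoidHom.mk' D hD.map_add).toIntLinearMap fun a b => by
    simp [hD.leibniz, mul_comm], rfl⟩

variable (d : Derivation ℤ M M)

def constField : Subfield M where
  carrier := {x | d x = 0}
  mul_mem' {a b} ha hb := by simp_all [d.leibniz]
  one_mem' := d.map_one_eq_zero
  add_mem' {a b} ha hb := by simp_all
  zero_mem' := d.map_zero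
  neg_mem' {a} ha := by simp_all
  inv_mem' a ha := by simp_all [d.leibniz_inv]

variable {d}

@[simp]
theorem mem_constField {x : M} : x ∈ constField d ↔ d x = 0 := Iff.rfl

def DiffClosed.derivation {F : Subfield M} (hF : DiffClosed d F) : Derivation ℤ F F where
  toFun x := ⟨d x, hF x x.2⟩
  map_add' x y := Subtype.ext (d.map_add x y)
  map_smul' n x := Subtype.ext (d.map_smul n (x : M))
  map_one_eq_zero' := Subtype.ext d.map_one_eq_zero
  leibniz' x y := Subtype.ext (d.leibniz (x : M) y)

theorem diffClosed_of_le_constField {F : Subfield M} (hF : F ≤ constField d) : DiffClosed d F :=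
  fun x hx => by
    rw [mem_constField.mp (hF hx)]
    exact F.zero_mem

variable (d) in
def derivMemSubfield (E : Subfield M) : Subfield M where
  carrier := {x | x ∈ E ∧ d x ∈ E}
  mul_mem' {a b} ha hb := ⟨E.mul_mem ha.1 hb.1, by
    rw [d.leibniz]; exact E.add_mem (E.mul_mem ha.1 hb.2) (E.mul_mem hb.1 ha.2)⟩
  one_mem' := ⟨E.one_mem, by rw [d.map_one_eq_zero]; exact E.zero_mem⟩
  add_mem' {a b} ha hb := ⟨E.add_mem ha.1 hb.1, by rw [d.map_add]; exact E.add_mem ha.2 hb.2⟩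
  zero_mem' := ⟨E.zero_mem, by rw [d.map_zero]; exact E.zero_mem⟩
  neg_mem' {a} ha := ⟨E.neg_mem ha.1, by rw [d.map_neg]; exact E.neg_mem ha.2⟩
  inv_mem' a ha := ⟨E.inv_mem ha.1, by
    rw [d.leibniz_inv, smul_eq_mul]
    exact E.mul_mem (E.neg_mem (E.pow_mem (E.inv_mem ha.1) 2)) ha.2⟩

theorem DiffClosed.sup {F G : Subfield M} (hF : DiffClosed d F) (hG : DiffClosed d G) :
    DiffClosed d (F ⊔ G) := by
  have hFle : F ≤ F ⊔ G := le_sup_left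
  have hGle : G ≤ F ⊔ G := le_sup_right
  have : F ⊔ G ≤ derivMemSubfield d (F ⊔ G) :=
    sup_le (fun x hx => ⟨hFle hx, hFle (hF x hx)⟩) fun x hx => ⟨hGle hx, hGle (hG x hx)⟩
  exact fun x hx => (this hx).2

theorem IsDiffGenBy.sup {K L E : Subfield M} {S : Set M} (h : IsDiffGenBy d K S L)
    (hE : DiffClosed d E) : IsDiffGenBy d (K ⊔ E) S (L ⊔ E) :=
  ⟨sup_le_sup_right h.1 E, h.2.1.trans (SetLike.coe_subset_coe.mpr le_sup_left),
    h.2.2.1.sup hE, fun F hKF hSF hF =>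
      sup_le (h.2.2.2 F (le_sup_left.trans hKF) hSF hF) (le_sup_right.trans hKF)⟩

theorem isAlgebraic_iff_exists_coeff_mem (F : Subfield M) {x : M} :
    IsAlgebraic F x ↔ ∃ p : M[X], p ≠ 0 ∧ (∀ k, p.coeff k ∈ F) ∧ p.eval x = 0 := by
  constructor
  · rintro ⟨q, hq0, hqx⟩
    refine ⟨q.map F.subtype, (Polynomial.map_ne_zero_iff F.subtype.injective).mpr hq0,
      fun k => by simp, by rw [eval_map]; exact hqx⟩
  · rintro ⟨p, hp0, hpF, hpx⟩
    obtain ⟨q, rfl⟩ : p ∈ lifts F.subtype :=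
      (lifts_iff_coeff_lifts p).mpr fun k => ⟨⟨_, hpF k⟩, rfl⟩
    exact ⟨q, fun h => hp0 (by simp [h]), by rwa [aeval_def, eval₂_eq_eval_map]⟩

theorem IsAlgebraic.of_le {F G : Subfield M} (hFG : F ≤ G) {x : M} (hx : IsAlgebraic F x) :
    IsAlgebraic G x := by
  obtain ⟨p, hp0, hpF, hpx⟩ := (isAlgebraic_iff_exists_coeff_mem F).mp hx
  exact (isAlgebraic_iff_exists_coeff_mem G).mpr ⟨p, hp0, fun k => hFG (hpF k), hpx⟩

theorem mem_of_isAlgebraic {F : Subfield M} [IsAlgClosed F] {x : M} (hx : IsAlgebraic F x) :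
    x ∈ F := by
  obtain ⟨y, rfl⟩ := minpoly.mem_range_of_degree_eq_one F x
    (IsAlgClosed.degree_eq_one_of_irreducible F (minpoly.irreducible hx.isIntegral))
  exact y.2

theorem isAlgClosed_of_exists_root {F : Subfield M}
    (h : ∀ p : M[X], 0 < p.degree → (∀ k, p.coeff k ∈ F) → ∃ x ∈ F, p.eval x = 0) :
    IsAlgClosed F := by
  refine IsAlgClosed.of_exists_root _ fun q _ hq => ?_
  obtain ⟨x, hx, hqx⟩ := h (q.map F.subtype)
    (by rw [degree_map]; exact degree_pos_of_irreducible hq) (fun k => by simp)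
  refine ⟨⟨x, hx⟩, F.subtype.injective ?_⟩
  rw [map_zero, ← eval₂_at_apply, ← eval_map]
  exact hqx

open scoped Differential in
theorem coeff_minpoly_mem_constField {F : Subfield M} (hF : DiffClosed d F) {x : M}
    (hx : d x = 0) (k : ℕ) : ((minpoly F x).coeff k : M) ∈ constField d := by
  let _ : Differential M := ⟨d⟩
  let _ : Differential F := ⟨hF.derivation⟩
  have _ : DifferentialAlgebra F M := ⟨fun _ => rfl⟩
  set q := minpoly F x
  suffices Differential.mapCoeffs q = 0 by
    have h := congrArg (coeff · k) this
    simp only [Differential.coeff_mapCoeffs, coeff_zero] at h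
    exact congrArg Subtype.val h
  by_cases hint : IsIntegral F x
  swap
  · simp [q, minpoly.eq_zero hint]
  have hx' : x′ = 0 := hx
  have hroot : aeval x (Differential.mapCoeffs q) = 0 := by
    simpa [q, hx', minpoly.aeval] using (Differential.deriv_aeval_eq x q).symm
  by_contra hne
  have hlt : (Differential.mapCoeffs q).degree < q.natDegree := by
    rw [degree_lt_iff_coeff_zero]
    intro m hm
    rw [Differential.coeff_mapCoeffs]
    rcases hm.eq_or_lt with rfl | hm
    · rw [(minpoly.monic hint).coeff_natDegree]
      exact Derivation.map_one_eq_zero _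
    · rw [coeff_eq_zero_of_natDegree_lt hm]
      exact map_zero _
  exact (minpoly.degree_le_of_ne_zero F x hne hroot).not_gt
    (by rwa [degree_eq_natDegree (minpoly.ne_zero hint)])

theorem IsAlgebraic.inf_constField {L : Subfield M} (hL : DiffClosed d L) {x : M} (hx : d x = 0)
    (halg : IsAlgebraic L x) : IsAlgebraic ↥(L ⊓ constField d) x := by
  refine (isAlgebraic_iff_exists_coeff_mem _).mpr ⟨(minpoly L x).map L.subtype,
    (Polynomial.map_ne_zero_iff L.subtype.injective).mpr (minpoly.ne_zero halg.isIntegral),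
    fun k => ?_, ?_⟩
  · rw [coeff_map]
    exact ⟨((minpoly L x).coeff k).2, coeff_minpoly_mem_constField hL hx k⟩
  · rw [eval_map]
    exact minpoly.aeval L x

open scoped Differential in
theorem mem_constField_of_isAlgebraic [CharZero M] {x : M} (hx : IsAlgebraic (constField d) x) :
    x ∈ constField d := by
  let _ : Differential M := ⟨d⟩
  let _ : Differential (constField d) := ⟨(diffClosed_of_le_constField le_rfl).derivation⟩
  have _ : DifferentialAlgebra (constField d) M := ⟨fun _ => rfl⟩
  set q := minpoly (constField d) x
  have hq : Differential.mapCoeffs q = 0 := by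
    ext k
    exact (q.coeff k).2
  have hsep : aeval x (derivative q) ≠ 0 :=
    (minpoly.irreducible hx.isIntegral).separable.aeval_derivative_ne_zero (minpoly.aeval _ x)
  have := Differential.deriv_aeval_eq x q
  simp only [q, minpoly.aeval, map_zero, hq, zero_add] at this
  exact (mul_eq_zero.mp this.symm).resolve_left hsep

theorem IsAlgClosureOf.isAlgebraic_s3 {F Cb : Subfield M}
    (h : IsAlgClosureOf (constantsOf d F) Cb) {x : M} (hx : x ∈ Cb) :
    IsAlgebraic ↥(F ⊓ constField d) x :=
  (isAlgebraic_iff_exists_coeff_mem _).mpr (h.2.1 x hx)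

theorem IsAlgClosureOf.le_constField [CharZero M] {F Cb : Subfield M}
    (h : IsAlgClosureOf (constantsOf d F) Cb) : Cb ≤ constField d := fun _ hx =>
  mem_constField_of_isAlgebraic ((h.isAlgebraic_s3 hx).of_le inf_le_right)

theorem IsAlgClosureOf.constantsOf_sup [CharZero M] {L Cb : Subfield M} (hL : DiffClosed d L)
    (h : IsAlgClosureOf (constantsOf d L) Cb) : constantsOf d (L ⊔ Cb) = Cb := by
  have : IsAlgClosed Cb := isAlgClosed_of_exists_root h.2.2
  refine subset_antisymm (fun x ⟨hxLCb, hx⟩ => ?_) fun x hx =>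
    ⟨(le_sup_right : Cb ≤ L ⊔ Cb) hx, h.le_constField hx⟩
  have hLCb : L ⊔ Cb ≤ (algebraicClosure L M).toSubfield :=
    sup_le (fun y hy => mem_algebraicClosure_iff.mpr (isAlgebraic_algebraMap (⟨y, hy⟩ : L)))
      fun y hy => mem_algebraicClosure_iff.mpr ((h.isAlgebraic_s3 hy).of_le inf_le_left)
  have hxL : IsAlgebraic L x := mem_algebraicClosure_iff.mp (hLCb hxLCb)
  exact mem_of_isAlgebraic ((hxL.inf_constField hL hx).of_le fun y hy => h.1 hy)

theorem linIndepOver_range_algebraMap_iff {R : Type*} [Field R] [Algebra R M] {ι : Type*}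
    {v : ι → M} : LinIndepOver (Set.range (algebraMap R M)) v ↔ LinearIndependent R v := by
  rw [linearIndependent_iff']
  constructor
  · intro h s g hg i hi
    refine (algebraMap R M).injective ?_
    rw [map_zero]
    exact h s (fun i => algebraMap R M (g i)) (fun i => ⟨g i, rfl⟩)
      (by simpa [Algebra.smul_def] using hg) i hi
  · intro h s c hc hsum i hi
    choose g hg using hc
    have hgc : c = fun i => algebraMap R M (g i) := funext fun i => (hg i).symm
    subst hgc
    simp [h s g (by simpa [Algebra.smul_def] using hsum) i hi]

theorem LinIndepOver.of_constantsOf {L : Subfield M} (hL : DiffClosed d L) {ι : Type*}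
    {v : ι → M} (hv : ∀ i, d (v i) = 0) (h : LinIndepOver (constantsOf d L) v) :
    LinIndepOver L v := by
  classical
  suffices H : ∀ (s : Finset ι) (c : ι → M), (∀ i ∈ s, c i ∈ L) →
      ∑ i ∈ s, c i * v i = 0 → ∀ i ∈ s, c i = 0 from
    fun s c hc => H s c fun i _ => hc i
  intro s
  induction s using Finset.strongInduction with
  | _ s ih =>
  intro c hcL hsum
  by_contra! ⟨i₀, hi₀, hc₀⟩
  set e := fun i => c i / c i₀
  have heL : ∀ i ∈ s, e i ∈ L := fun i hi => L.div_mem (hcL i hi) (hcL i₀ hi₀)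
  have he : ∑ i ∈ s, e i * v i = 0 := by
    simp_rw [e, div_mul_eq_mul_div, ← Finset.sum_div, hsum, zero_div]
  have hde : ∑ i ∈ s.erase i₀, d (e i) * v i = 0 := by
    have := congrArg d he
    rw [map_sum, map_zero, ← Finset.add_sum_erase _ _ hi₀] at this
    simpa [d.leibniz, hv, e, hc₀, mul_comm] using this
  have hconst : ∀ i ∈ s, e i ∈ constantsOf d L := by
    intro i hi
    refine ⟨heL i hi, ?_⟩
    rcases eq_or_ne i i₀ with rfl | hne
    · simp [e, hc₀]
    · exact ih _ (Finset.erase_ssubset hi₀) _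
        (fun j hj => hL _ (heL j (Finset.mem_of_mem_erase hj))) hde i
        (Finset.mem_erase.mpr ⟨hne, hi⟩)
  have := h s (s.piecewise e 0) (fun i => by
      by_cases hi : i ∈ s
      · simpa [hi] using hconst i hi
      · rw [Finset.piecewise_eq_of_notMem _ _ _ hi]
        exact ⟨L.zero_mem, map_zero d⟩)
    (by rw [← he]; exact Finset.sum_congr rfl fun i hi => by simp [hi]) i₀ hi₀
  simp [hi₀, e, hc₀] at this

theorem LinIndepOver.constField_of_constantsOf {L : Subfield M} (hL : DiffClosed d L) {ι : Type*}
    {η : ι → M} (hη : ∀ i, η i ∈ L) (h : LinIndepOver (constantsOf d L) η) :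
    LinIndepOver (constField d) η := by
  let C := L ⊓ constField d
  let A : IntermediateField C M := (constField d).toIntermediateField fun x => x.2.2
  let B : IntermediateField C M := L.toIntermediateField fun x => x.2.1
  have hC : Set.range (algebraMap C M) = constantsOf d L := Subtype.range_val
  have hA : Set.range (algebraMap A M) = constField d := Subtype.range_val
  have hB : Set.range (algebraMap B M) = L := Subtype.range_val
  have hAB : A.LinearDisjoint B := by
    let a := Module.Basis.ofVectorSpace C A
    refine .of_basis_left a ?_
    rw [← linIndepOver_range_algebraMap_iff, hB]
    refine LinIndepOver.of_constantsOf hL (fun i => (a i).2) ?_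
    rw [← hC, linIndepOver_range_algebraMap_iff]
    exact a.linearIndependent.map' A.val.toLinearMap (LinearMap.ker_eq_bot.mpr A.val.injective)
  rw [← hA, linIndepOver_range_algebraMap_iff]
  refine hAB.linearIndependent_right (b := fun i => (⟨η i, hη i⟩ : B)) ?_
  refine LinearIndependent.of_comp B.val.toLinearMap ?_
  rw [← linIndepOver_range_algebraMap_iff, hC]
  exact h

end PVGalois

theorem statement_3_general {M : Type*} [Field M] [CharZero M] (D : M → M) (hD : IsDerivation D)
    (K L : Subfield M) (n : ℕ) (a : Fin n → M) (hPV : IsPicardVessiot D K L n a)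
    (Cb : Subfield M) (hCb : IsAlgClosureOf (constantsOf D K) Cb) :
    IsPicardVessiot D (K ⊔ Cb) (L ⊔ Cb) n a ∧
    constantsOf D (L ⊔ Cb) = constantsOf D (K ⊔ Cb) ∧
    constantsOf D (K ⊔ Cb) = (Cb : Set M) := by
  obtain ⟨d, rfl⟩ := hD.exists_derivation
  obtain ⟨η, ha, hsol, hlin, hgen, hconst⟩ := hPV
  have hL : DiffClosed d L := hgen.2.2.1
  rw [← hconst] at hCb
  have hLb : constantsOf d (L ⊔ Cb) = Cb := hCb.constantsOf_sup hL
  have hKb : constantsOf d (K ⊔ Cb) = Cb :=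
    subset_antisymm (fun x hx => hLb ▸ ⟨sup_le_sup_right hgen.1 Cb hx.1, hx.2⟩)
      fun x hx => ⟨(le_sup_right : Cb ≤ K ⊔ Cb) hx, hCb.le_constField hx⟩
  have hlin' : LinIndepOver (constantsOf d (L ⊔ Cb)) η := fun s c hc =>
    hlin.constField_of_constantsOf hL (fun i => hgen.2.1 ⟨i, rfl⟩) s c fun i => (hc i).2
  refine ⟨⟨η, fun i => (le_sup_left : K ≤ K ⊔ Cb) (ha i), hsol, hlin',
    hgen.sup (diffClosed_of_le_constField hCb.le_constField), hLb.trans hKb.symm⟩,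
    hLb.trans hKb.symm, hKb⟩

/-- If `L|K` is a Picard-Vessiot extension for the equation with
coefficients `a`, and `Cb` is an algebraic closure of the constants of `K`, then
`L̄ = L ⊔ Cb` is a Picard-Vessiot extension of `K̄ = K ⊔ Cb` for the same equation;
in particular the constants of `L̄` equal the constants `Cb` of `K̄`. -/
theorem statement_3 {M : Type*} [Field M] [CharZero M] (D : M → M) (hD : IsDerivation D)
    (K L : Subfield M) (hKdc : DiffClosed D K) (hKL : K ≤ L)
    (n : ℕ) (a : Fin n → M) (hPV : IsPicardVessiot D K L n a)
    (Cb : Subfield M) (hCb : IsAlgClosureOf (constantsOf D K) Cb) :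
    IsPicardVessiot D (K ⊔ Cb) (L ⊔ Cb) n a ∧
    constantsOf D (L ⊔ Cb) = constantsOf D (K ⊔ Cb) ∧
    constantsOf D (K ⊔ Cb) = (Cb : Set M) :=
  statement_3_general D hD K L n a hPV Cb hCb
end

section
/- Let K be a differential field of characteristic 0 with field of constants C, and E|K a differential field extension with constants C. Let C̃ be a finite Galois extension of C, and set K̃ = C̃·K and Ẽ = C̃·E (composita inside a common differential field extension). Extend the action of Gal(C̃|C) to Ẽ by letting it act trivially on E. Suppose Ṽ is a finite-dimensional C̃-vector subspace of Ẽ that is stable under the action of Gal(C̃|C) and such that Ẽ is differentially generated over K̃ by Ṽ. Then E is differentially generated over K by the C-vector space of invariants Ṽ^{Gal(C̃|C)} = {y ∈ Ṽ : c(y) = y for all c ∈ Gal(C̃|C)}. -/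
open PVGalois



namespace PVGalois
variable {M : Type*} [Field M]

open Classical in
private noncomputable def cmp (S : Subfield M) (h g : ↥S →+* M) : ↥S →+* M :=
  if hg : ∀ x, g x ∈ S then h.comp (g.codRestrict S hg) else g

open Classical in
private lemma cmp_apply (S : Subfield M) (h g : ↥S →+* M)
    (hg : ∀ x, g x ∈ S) (x : ↥S) : cmp S h g x = h ⟨g x, hg x⟩ := by
  simp only [cmp, dif_pos hg]
  rfl

open Classical in
private noncomputable def res (S : Subfield M) (g : ↥S →+* M) (x : ↥S) : ↥S :=
  if hg : ∀ y, g y ∈ S then ⟨g x, hg x⟩ else 0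

open Classical in
private lemma res_apply (S : Subfield M) (g : ↥S →+* M) (hg : ∀ y, g y ∈ S) (x : ↥S) :
    res S g x = ⟨g x, hg x⟩ := dif_pos hg

private lemma res_coe (S : Subfield M) (g : ↥S →+* M) (hg : ∀ y, g y ∈ S) (x : ↥S) :
    (res S g x : M) = g x := by rw [res_apply S g hg x]

end PVGalois

private lemma span_inv_mem' {M : Type*} [Field M] (F Ct : Subfield M)
    (hfg : (Submodule.span ↥F ((Ct : Set M))).FG) (x : M)
    (hx : x ∈ Submodule.span ↥F ((Ct : Set M))) :
    x⁻¹ ∈ Submodule.span ↥F ((Ct : Set M)) := by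
  have hmono : (↑(Submonoid.closure ((Ct : Set M))) : Set M) ⊆ (Ct : Set M) := by
    intro y hy
    induction hy using Submonoid.closure_induction with
    | mem z hz => exact hz
    | one => exact one_mem Ct
    | mul a b _ _ ha hb => exact mul_mem ha hb
  have hsub : (Submodule.span ↥F ((Ct : Set M)))
      = Subalgebra.toSubmodule (Algebra.adjoin ↥F ((Ct : Set M))) := by
    apply le_antisymm
    · rw [Submodule.span_le]; exact Algebra.subset_adjoin
    · rw [Algebra.adjoin_eq_span]
      exact Submodule.span_mono hmono
  have hxA : x ∈ Algebra.adjoin ↥F ((Ct : Set M)) := by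
    have := hx; rw [hsub] at this; exact this
  have hint : IsIntegral ↥F x := by
    refine IsIntegral.of_mem_of_fg (Algebra.adjoin ↥F ((Ct : Set M))) ?_ x hxA
    rw [← hsub]; exact hfg
  have : x⁻¹ ∈ Algebra.adjoin ↥F ((Ct : Set M)) :=
    Subalgebra.inv_mem_of_algebraic (Algebra.adjoin ↥F ((Ct : Set M)))
      (x := ⟨x, hxA⟩) hint.isAlgebraic
  rw [hsub]; exact this

set_option maxHeartbeats 1000000 in
set_option synthInstance.maxHeartbeats 1000000 in
/-- (Galois descent of differential generation.) Let `E|K` be a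
differential field extension with the same constants `C` as `K`, `Ct` a finite Galois
extension of `C` (consisting of constants), `K̃ = Ct·K`, `Ẽ = Ct·E`, and let `G` be the
Galois group `Gal(Ct|C)`, acting on `Ẽ` by `E`-differential automorphisms stabilizing
`Ct`, with fixed field `C` in `Ct`.  If `Ṽ ⊆ Ẽ` is a `G`-stable finite-dimensional
`Ct`-vector subspace such that `Ẽ` is differentially generated over `K̃` by `Ṽ`, then
`E` is differentially generated over `K` by the `C`-vector space of invariants `Ṽ^G`. -/
theorem statement_13 {M : Type*} [Field M] [CharZero M] (D : M → M) (hD : IsDerivation D)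
    (K E : Subfield M) (hKdc : DiffClosed D K) (hEdc : DiffClosed D E) (hKE : K ≤ E)
    (hconst : constantsOf D E = constantsOf D K)
    (Ct : Subfield M) (hCCt : constantsOf D K ⊆ (Ct : Set M))
    (hCtconst : ∀ x ∈ Ct, D x = 0)
    (hCtfin : ∃ s : Finset M, (s : Set M) ⊆ (Ct : Set M) ∧
      SpansOver (constantsOf D K) (fun i : {x // x ∈ s} => (i : M)) (Ct : Set M))
    (G : Set (↥(Ct ⊔ E) →+* M)) (hGfin : G.Finite)
    -- each element of `G` is an `E`-differential automorphism of `Ẽ` stabilizing `Ct`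
    (hGaut : ∀ g ∈ G, IsDiffHom D E (Ct ⊔ E) (Ct ⊔ E) g ∧
      (∀ y ∈ Ct ⊔ E, ∃ x : ↥(Ct ⊔ E), g x = y) ∧
      (∀ x : M, ∀ hx : x ∈ Ct, g ⟨x, SetLike.le_def.mp le_sup_left hx⟩ ∈ Ct))
    -- `G` is a group under composition
    (hGone : (Ct ⊔ E).subtype ∈ G)
    (hGmul : ∀ g ∈ G, ∀ g' ∈ G, ∃ h ∈ G, ∀ (x : ↥(Ct ⊔ E)) (hx : g' x ∈ Ct ⊔ E),
      h x = g ⟨g' x, hx⟩)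
    (hGinv : ∀ g ∈ G, ∃ h ∈ G, ∀ (x : ↥(Ct ⊔ E)) (hx : g x ∈ Ct ⊔ E),
      h ⟨g x, hx⟩ = (x : M))
    -- `Ct|C` is Galois with group `G`: the fixed field of `G` in `Ct` is `C`
    (hGalois : {x : M | ∃ hx : x ∈ Ct,
        ∀ g ∈ G, g ⟨x, SetLike.le_def.mp le_sup_left hx⟩ = x} = constantsOf D K)
    -- `Ṽ` is a `G`-stable finite-dimensional `Ct`-subspace of `Ẽ`
    (V : Set M) (hVE : V ⊆ ((Ct ⊔ E : Subfield M) : Set M))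
    (hVadd : ∀ u ∈ V, ∀ v ∈ V, u + v ∈ V)
    (hVsmul : ∀ c ∈ Ct, ∀ v ∈ V, c * v ∈ V)
    (hVfin : ∃ s : Finset M, (s : Set M) ⊆ V ∧
      SpansOver (Ct : Set M) (fun i : {x // x ∈ s} => (i : M)) V)
    (hVstable : ∀ g ∈ G, ∀ v : M, ∀ hv : v ∈ V, g ⟨v, hVE hv⟩ ∈ V)
    -- `Ẽ` is differentially generated over `K̃` by `Ṽ`
    (hgen : IsDiffGenBy D (Ct ⊔ K) V (Ct ⊔ E)) :
    IsDiffGenBy D K {y : M | ∃ hy : y ∈ V, ∀ g ∈ G, g ⟨y, hVE hy⟩ = y} E := by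
  classical
  obtain ⟨sCt, hsCt_sub, hsCt_span⟩ := hCtfin
  have hCsubK : (constantsOf D K) ⊆ (K : Set M) := fun x hx => hx.1
  have hD0 : D 0 = 0 := by
    have h := hD.map_add 0 0
    rw [add_zero] at h
    exact (left_eq_add.mp h)
  have hGmem : ∀ g ∈ G, ∀ x : ↥(Ct ⊔ E), g x ∈ Ct ⊔ E := fun g hg => (hGaut g hg).1.1
  have hGfix : ∀ g ∈ G, ∀ x : ↥(Ct ⊔ E), (x : M) ∈ E → g x = x := fun g hg => (hGaut g hg).1.2.1
  have hGct : ∀ g ∈ G, ∀ (c : M) (hc : c ∈ Ct),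
      g ⟨c, SetLike.le_def.mp le_sup_left hc⟩ ∈ Ct := fun g hg => (hGaut g hg).2.2
  have hGsurj : ∀ g ∈ G, ∀ y ∈ Ct ⊔ E, ∃ x : ↥(Ct ⊔ E), g x = y := fun g hg => (hGaut g hg).2.1
  set Gfin : Finset (↥(Ct ⊔ E) →+* M) := hGfin.toFinset with hGfin_def
  have hmemGfin : ∀ g, g ∈ Gfin ↔ g ∈ G := fun g => hGfin.mem_toFinset
  have cmp_mem : ∀ h ∈ G, ∀ g ∈ G, PVGalois.cmp (Ct ⊔ E) h g ∈ G := by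
    intro h hh g hg
    obtain ⟨k, hk, hkeq⟩ := hGmul h hh g hg
    have he : PVGalois.cmp (Ct ⊔ E) h g = k := by
      ext x
      rw [PVGalois.cmp_apply (Ct ⊔ E) h g (hGmem g hg) x]
      exact (hkeq x (hGmem g hg x)).symm
    rw [he]; exact hk
  have congr_sub : ∀ (f : ↥(Ct ⊔ E) →+* M) (a b : M) (ha : a ∈ Ct ⊔ E) (hb : b ∈ Ct ⊔ E),
      a = b → f ⟨a, ha⟩ = f ⟨b, hb⟩ := by
    intro f a b ha hb h
    cases h; rfl
  have cmp_left_inv : ∀ h ∈ G, ∀ h' ∈ G,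
      (∀ (x : ↥(Ct ⊔ E)) (hx : h x ∈ Ct ⊔ E), h' ⟨h x, hx⟩ = (x : M)) →
      ∀ g ∈ G, PVGalois.cmp (Ct ⊔ E) h' (PVGalois.cmp (Ct ⊔ E) h g) = g := by
    intro h hh h' hh' hinv g hg
    ext x
    rw [PVGalois.cmp_apply (Ct ⊔ E) h' (PVGalois.cmp (Ct ⊔ E) h g)
      (hGmem _ (cmp_mem h hh g hg)) x]
    rw [congr_sub h' _ _ (hGmem _ (cmp_mem h hh g hg) x)
      (hGmem h hh ⟨g x, hGmem g hg x⟩) (PVGalois.cmp_apply (Ct ⊔ E) h g (hGmem g hg) x)]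
    exact hinv ⟨g x, hGmem g hg x⟩ (hGmem h hh ⟨g x, hGmem g hg x⟩)
  have sum_reindex : ∀ h ∈ G, ∀ f : (↥(Ct ⊔ E) →+* M) → M,
      ∑ g ∈ Gfin, f (PVGalois.cmp (Ct ⊔ E) h g) = ∑ g ∈ Gfin, f g := by
    intro h hh f
    obtain ⟨h', hh', hinv⟩ := hGinv h hh
    have hinj : ∀ g₁ ∈ Gfin, ∀ g₂ ∈ Gfin,
        PVGalois.cmp (Ct ⊔ E) h g₁ = PVGalois.cmp (Ct ⊔ E) h g₂ → g₁ = g₂ := by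
      intro g₁ hg₁ g₂ hg₂ he
      rw [← cmp_left_inv h hh h' hh' hinv g₁ ((hmemGfin _).mp hg₁),
          ← cmp_left_inv h hh h' hh' hinv g₂ ((hmemGfin _).mp hg₂), he]
    have himg : Gfin.image (fun g => PVGalois.cmp (Ct ⊔ E) h g) = Gfin := by
      apply Finset.eq_of_subset_of_card_le
      · intro y hy
        obtain ⟨g, hg, rfl⟩ := Finset.mem_image.mp hy
        exact (hmemGfin _).mpr (cmp_mem h hh g ((hmemGfin _).mp hg))
      · rw [Finset.card_image_of_injOn hinj]
    calc ∑ g ∈ Gfin, f (PVGalois.cmp (Ct ⊔ E) h g)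
        = ∑ y ∈ Gfin.image (fun g => PVGalois.cmp (Ct ⊔ E) h g), f y :=
          (Finset.sum_image hinj).symm
      _ = ∑ g ∈ Gfin, f g := by rw [himg]
  have coe_sum : ∀ (t : Finset (↥(Ct ⊔ E) →+* M)) (f : (↥(Ct ⊔ E) →+* M) → ↥(Ct ⊔ E)),
      ((∑ i ∈ t, f i : ↥(Ct ⊔ E)) : M) = ∑ i ∈ t, (f i : M) :=
    fun t f => map_sum (Ct ⊔ E).subtype f t
  have trace_mem : ∀ (c : M) (hc : c ∈ Ct),
      (∑ g ∈ Gfin, g ⟨c, SetLike.le_def.mp le_sup_left hc⟩) ∈ constantsOf D K := by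
    intro c hc
    have htcCt : (∑ g ∈ Gfin, g ⟨c, SetLike.le_def.mp le_sup_left hc⟩) ∈ Ct :=
      sum_mem (fun g hg => hGct g ((hmemGfin g).mp hg) c hc)
    rw [← hGalois]
    refine ⟨htcCt, ?_⟩
    intro h hh
    have hrep : (⟨∑ g ∈ Gfin, g ⟨c, SetLike.le_def.mp le_sup_left hc⟩,
        SetLike.le_def.mp le_sup_left htcCt⟩ : ↥(Ct ⊔ E))
        = ∑ g ∈ Gfin, PVGalois.res (Ct ⊔ E) g ⟨c, SetLike.le_def.mp le_sup_left hc⟩ := by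
      apply Subtype.ext
      rw [coe_sum]
      exact Finset.sum_congr rfl
        (fun g hg => (PVGalois.res_coe (Ct ⊔ E) g (hGmem g ((hmemGfin g).mp hg)) _).symm)
    rw [hrep, map_sum]
    have hterm : ∀ g ∈ Gfin,
        h (PVGalois.res (Ct ⊔ E) g ⟨c, SetLike.le_def.mp le_sup_left hc⟩)
        = PVGalois.cmp (Ct ⊔ E) h g ⟨c, SetLike.le_def.mp le_sup_left hc⟩ := by
      intro g hg
      rw [PVGalois.res_apply (Ct ⊔ E) g (hGmem g ((hmemGfin g).mp hg)),
        PVGalois.cmp_apply (Ct ⊔ E) h g (hGmem g ((hmemGfin g).mp hg))]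
    rw [Finset.sum_congr rfl hterm]
    exact sum_reindex h hh (fun g => g ⟨c, SetLike.le_def.mp le_sup_left hc⟩)
  have span_fg : ∀ F : Subfield M, K ≤ F → (Submodule.span ↥F ((Ct : Set M))).FG := by
    intro F hKF
    have heq : Submodule.span ↥F ((Ct : Set M)) = Submodule.span ↥F ((sCt : Set M)) := by
      apply le_antisymm
      · rw [Submodule.span_le]
        intro x hx
        obtain ⟨t, cf, hcf, hrep⟩ := hsCt_span x hx
        rw [hrep]
        refine sum_mem (fun i _ => ?_)
        have hcfF : cf i ∈ F := hKF (hCsubK (hcf i))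
        have he : cf i * (i : M) = (⟨cf i, hcfF⟩ : ↥F) • (i : M) := rfl
        rw [he]
        exact Submodule.smul_mem _ _ (Submodule.subset_span (Finset.mem_coe.mpr i.2))
      · exact Submodule.span_mono hsCt_sub
    exact ⟨sCt, heq.symm⟩
  have span_subset : ∀ F : Subfield M, ∀ x ∈ Submodule.span ↥F ((Ct : Set M)), x ∈ Ct ⊔ F := by
    intro F x hx
    induction hx using Submodule.span_induction with
    | mem z hz => exact SetLike.le_def.mp le_sup_left hz
    | zero => exact zero_mem _
    | add a b _ _ ha hb => exact add_mem ha hb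
    | smul f z _ hz => exact mul_mem (SetLike.le_def.mp le_sup_right f.2) hz
  have spanEq : ∀ F : Subfield M, K ≤ F → DiffClosed D F →
      ((Ct ⊔ F : Subfield M) : Set M) = (Submodule.span ↥F ((Ct : Set M)) : Set M) := by
    intro F hKF hFdc
    apply Set.Subset.antisymm
    · intro x hx
      have hx' : x ∈ Subfield.closure ((Ct : Set M) ∪ (F : Set M)) := by
        have hle : Ct ⊔ F ≤ Subfield.closure ((Ct : Set M) ∪ (F : Set M)) :=
          sup_le (fun y hy => Subfield.subset_closure (Or.inl hy))
                 (fun y hy => Subfield.subset_closure (Or.inr hy))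
        exact hle hx
      clear hx
      induction hx' using Subfield.closure_induction with
      | mem z hz =>
        rcases hz with hz | hz
        · exact Submodule.subset_span hz
        · have he : z = (⟨z, hz⟩ : ↥F) • (1 : M) := (mul_one z).symm
          rw [he]
          exact Submodule.smul_mem _ _ (Submodule.subset_span (one_mem Ct))
      | one => exact Submodule.subset_span (one_mem Ct)
      | add a b _ _ ha hb => exact add_mem ha hb
      | neg a _ ha => exact neg_mem ha
      | inv a _ ha => exact span_inv_mem' F Ct (span_fg F hKF) a ha
      | mul a b _ _ ha hb =>
        have h1 : a * b ∈ Submodule.span ↥F ((Ct : Set M)) * Submodule.span ↥F ((Ct : Set M)) :=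
          Submodule.mul_mem_mul ha hb
        rw [Submodule.span_mul_span] at h1
        refine Submodule.span_le.mpr ?_ h1
        intro y hy
        obtain ⟨u, hu, w, hw, rfl⟩ := hy
        exact Submodule.subset_span (mul_mem hu hw)
    · intro x hx
      exact span_subset F x hx
  have spanDiff : ∀ F : Subfield M, DiffClosed D F →
      ∀ x ∈ Submodule.span ↥F ((Ct : Set M)), D x ∈ Submodule.span ↥F ((Ct : Set M)) := by
    intro F hFdc x hx
    induction hx using Submodule.span_induction with
    | mem z hz => rw [hCtconst z hz]; exact zero_mem _
    | zero => rw [hD0]; exact zero_mem _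
    | add a b _ _ ha hb => rw [hD.map_add]; exact add_mem ha hb
    | smul f z hz hdz =>
      show D ((f : M) * z) ∈ _
      rw [hD.leibniz]
      refine add_mem (Submodule.smul_mem _ f hdz) ?_
      have hDf : D (f : M) ∈ F := hFdc _ f.2
      have he : D (f : M) * z = (⟨D (f : M), hDf⟩ : ↥F) • z := rfl
      rw [he]
      exact Submodule.smul_mem _ _ hz
  have supDiff : ∀ F : Subfield M, K ≤ F → DiffClosed D F → DiffClosed D (Ct ⊔ F) := by
    intro F hKF hFdc x hx
    have h1 : x ∈ Submodule.span ↥F ((Ct : Set M)) := by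
      have h2 : x ∈ ((Ct ⊔ F : Subfield M) : Set M) := hx
      rw [spanEq F hKF hFdc] at h2
      exact h2
    exact span_subset F _ (spanDiff F hFdc x h1)
  have reyn : ∀ F : Subfield M, K ≤ F → F ≤ E → ∀ x, x ∈ Submodule.span ↥F ((Ct : Set M)) →
      ∀ hxS : x ∈ Ct ⊔ E, (∀ g ∈ G, g ⟨x, hxS⟩ = x) → x ∈ F := by
    intro F hKF hFE x hx hxS hfix
    have key : ∀ y, y ∈ Submodule.span ↥F ((Ct : Set M)) →
        ∃ hyS : y ∈ Ct ⊔ E, (∑ g ∈ Gfin, g ⟨y, hyS⟩) ∈ F := by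
      intro y hy
      induction hy using Submodule.span_induction with
      | mem z hz =>
        exact ⟨SetLike.le_def.mp le_sup_left hz, hKF (hCsubK (trace_mem z hz))⟩
      | zero =>
        refine ⟨zero_mem _, ?_⟩
        have hz : (∑ g ∈ Gfin, g (⟨(0 : M), zero_mem _⟩ : ↥(Ct ⊔ E))) = 0 :=
          Finset.sum_eq_zero (fun g _ => by
            rw [show (⟨(0 : M), zero_mem _⟩ : ↥(Ct ⊔ E)) = 0 from rfl, map_zero])
        rw [hz]
        exact zero_mem F
      | add a b ha hb iha ihb =>
        obtain ⟨haS, hfa⟩ := iha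
        obtain ⟨hbS, hfb⟩ := ihb
        refine ⟨add_mem haS hbS, ?_⟩
        have hstep : ∀ g ∈ Gfin, g ⟨a + b, add_mem haS hbS⟩ = g ⟨a, haS⟩ + g ⟨b, hbS⟩ := by
          intro g _
          rw [show (⟨a + b, add_mem haS hbS⟩ : ↥(Ct ⊔ E)) = ⟨a, haS⟩ + ⟨b, hbS⟩ from rfl,
            map_add]
        rw [Finset.sum_congr rfl hstep, Finset.sum_add_distrib]
        exact add_mem hfa hfb
      | smul f z hzspan ih =>
        obtain ⟨hzS, hfz⟩ := ih
        have hfS : (f : M) ∈ Ct ⊔ E := SetLike.le_def.mp le_sup_right (hFE f.2)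
        refine ⟨mul_mem hfS hzS, ?_⟩
        have hstep : ∀ g ∈ Gfin, g ⟨f • z, mul_mem hfS hzS⟩ = (f : M) * g ⟨z, hzS⟩ := by
          intro g hg
          rw [show (⟨f • z, mul_mem hfS hzS⟩ : ↥(Ct ⊔ E)) = ⟨(f : M), hfS⟩ * ⟨z, hzS⟩ from rfl,
            map_mul, hGfix g ((hmemGfin g).mp hg) ⟨(f : M), hfS⟩ (hFE f.2)]
        rw [Finset.sum_congr rfl hstep, ← Finset.mul_sum]
        exact mul_mem f.2 hfz
    obtain ⟨hxS', hsum⟩ := key x hx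
    have hsum' : (∑ g ∈ Gfin, g ⟨x, hxS'⟩) = (Gfin.card : M) * x := by
      rw [Finset.sum_congr rfl (fun g hg => hfix g ((hmemGfin g).mp hg)),
        Finset.sum_const, nsmul_eq_mul]
    rw [hsum'] at hsum
    have hcard : ((Gfin.card : ℕ) : M) ≠ 0 := by
      have hpos : 0 < Gfin.card := Finset.card_pos.mpr ⟨_, (hmemGfin _).mpr hGone⟩
      exact Nat.cast_ne_zero.mpr hpos.ne'
    have hres := mul_mem (inv_mem (natCast_mem F Gfin.card)) hsum
    rwa [inv_mul_cancel_left₀ hcard] at hres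
  have hVGE : {y : M | ∃ hy : y ∈ V, ∀ g ∈ G, g ⟨y, hVE hy⟩ = y} ⊆ (E : Set M) := by
    intro y hy
    obtain ⟨hyV, hyfix⟩ := hy
    have hyS : y ∈ Ct ⊔ E := hVE hyV
    have hyspan : y ∈ Submodule.span ↥E ((Ct : Set M)) := by
      have h2 : y ∈ ((Ct ⊔ E : Subfield M) : Set M) := hyS
      rw [spanEq E hKE hEdc] at h2
      exact h2
    exact reyn E hKE le_rfl y hyspan hyS hyfix
  have ginj : ∀ g ∈ G, ∀ g' ∈ G,
      (∀ (c : M) (hc : c ∈ Ct), g ⟨c, SetLike.le_def.mp le_sup_left hc⟩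
        = g' ⟨c, SetLike.le_def.mp le_sup_left hc⟩) → g = g' := by
    intro g hg g' hg' hagree
    have key : ∀ z, z ∈ Submodule.span ↥E ((Ct : Set M)) →
        ∃ hzS : z ∈ Ct ⊔ E, g ⟨z, hzS⟩ = g' ⟨z, hzS⟩ := by
      intro z hz
      induction hz using Submodule.span_induction with
      | mem c hc => exact ⟨SetLike.le_def.mp le_sup_left hc, hagree c hc⟩
      | zero =>
        refine ⟨zero_mem _, ?_⟩
        rw [show (⟨(0 : M), zero_mem _⟩ : ↥(Ct ⊔ E)) = 0 from rfl, map_zero, map_zero]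
      | add a b _ _ iha ihb =>
        obtain ⟨haS, hea⟩ := iha
        obtain ⟨hbS, heb⟩ := ihb
        refine ⟨add_mem haS hbS, ?_⟩
        rw [show (⟨a + b, add_mem haS hbS⟩ : ↥(Ct ⊔ E)) = ⟨a, haS⟩ + ⟨b, hbS⟩ from rfl,
          map_add, map_add, hea, heb]
      | smul f z _ ih =>
        obtain ⟨hzS, hez⟩ := ih
        have hfS : (f : M) ∈ Ct ⊔ E := SetLike.le_def.mp le_sup_right f.2
        refine ⟨mul_mem hfS hzS, ?_⟩
        rw [show (⟨f • z, mul_mem hfS hzS⟩ : ↥(Ct ⊔ E)) = ⟨(f : M), hfS⟩ * ⟨z, hzS⟩ from rfl,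
          map_mul, map_mul, hGfix g hg ⟨(f : M), hfS⟩ f.2, hGfix g' hg' ⟨(f : M), hfS⟩ f.2, hez]
    ext x
    have hxspan : (x : M) ∈ Submodule.span ↥E ((Ct : Set M)) := by
      have h2 : (x : M) ∈ ((Ct ⊔ E : Subfield M) : Set M) := x.2
      rw [spanEq E hKE hEdc] at h2
      exact h2
    obtain ⟨hzS, he⟩ := key (x : M) hxspan
    have hx : (⟨(x : M), hzS⟩ : ↥(Ct ⊔ E)) = x := Subtype.ext rfl
    rw [← hx]
    exact he
  have hVspan : ∀ v, v ∈ V →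
      v ∈ Submodule.span ↥Ct {y : M | ∃ hy : y ∈ V, ∀ g ∈ G, g ⟨y, hVE hy⟩ = y} := by
    intro v hv
    by_contra hvW
    set W : Submodule ↥Ct M :=
      Submodule.span ↥Ct {y : M | ∃ hy : y ∈ V, ∀ g ∈ G, g ⟨y, hVE hy⟩ = y} with hWdef
    have hπv : W.mkQ v ≠ 0 := by
      intro hcon0
      exact hvW ((Submodule.Quotient.mk_eq_zero W).mp hcon0)
    have hφ : ∃ φ : Module.Dual ↥Ct (M ⧸ W), φ (W.mkQ v) ≠ 0 := by
      by_contra hcon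
      push_neg at hcon
      exact hπv ((Module.forall_dual_apply_eq_zero_iff ↥Ct (W.mkQ v)).mp hcon)
    obtain ⟨φ, hφv⟩ := hφ
    set L : M →ₗ[↥Ct] ↥Ct := φ.comp W.mkQ with hLdef
    have hmem' : ∀ i : {g : ↥(Ct ⊔ E) →+* M // g ∈ Gfin}, i.1 ∈ G :=
      fun i => (hmemGfin _).mp i.2
    set χ : {g : ↥(Ct ⊔ E) →+* M // g ∈ Gfin} → (↥Ct →* ↥Ct) := fun i =>
      ((i.1.comp (Subfield.inclusion (le_sup_left : Ct ≤ Ct ⊔ E))).codRestrict Ct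
        (fun c => hGct i.1 (hmem' i) (c : M) c.2)).toMonoidHom with hχdef
    have χ_apply : ∀ (i : {g : ↥(Ct ⊔ E) →+* M // g ∈ Gfin}) (c : ↥Ct),
        ((χ i c : ↥Ct) : M) = i.1 ⟨(c : M), SetLike.le_def.mp le_sup_left c.2⟩ :=
      fun i c => rfl
    have hχinj : Function.Injective χ := by
      intro i j hij
      apply Subtype.ext
      apply ginj i.1 (hmem' i) j.1 (hmem' j)
      intro c hc
      have h2 := congrArg (fun (f : ↥Ct →* ↥Ct) => ((f ⟨c, hc⟩ : ↥Ct) : M)) hij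
      simpa only [χ_apply] using h2
    have hli : LinearIndependent ↥Ct (fun i : {g : ↥(Ct ⊔ E) →+* M // g ∈ Gfin} => ⇑(χ i)) :=
      (linearIndependent_monoidHom ↥Ct ↥Ct).comp χ hχinj
    have hTV : ∀ c : ↥Ct,
        (∑ g ∈ Gfin, g ⟨(c : M), SetLike.le_def.mp le_sup_left c.2⟩ * g ⟨v, hVE hv⟩) ∈ V := by
      intro c
      have h0V : (0 : M) ∈ V := by
        have h2 := hVsmul 0 (zero_mem Ct) v hv
        simpa using h2
      refine Finset.sum_induction _ (· ∈ V) (fun a b ha hb => hVadd a ha b hb) h0V ?_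
      intro g hg
      exact hVsmul _ (hGct g ((hmemGfin g).mp hg) (c : M) c.2) _
        (hVstable g ((hmemGfin g).mp hg) v hv)
    have hTfix : ∀ c : ↥Ct, ∀ h ∈ G,
        ∀ hTS : (∑ g ∈ Gfin, g ⟨(c : M), SetLike.le_def.mp le_sup_left c.2⟩ * g ⟨v, hVE hv⟩) ∈ Ct ⊔ E,
        h ⟨∑ g ∈ Gfin, g ⟨(c : M), SetLike.le_def.mp le_sup_left c.2⟩ * g ⟨v, hVE hv⟩, hTS⟩
          = ∑ g ∈ Gfin, g ⟨(c : M), SetLike.le_def.mp le_sup_left c.2⟩ * g ⟨v, hVE hv⟩ := by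
      intro c h hh hTS
      have hrep : (⟨∑ g ∈ Gfin, g ⟨(c : M), SetLike.le_def.mp le_sup_left c.2⟩ * g ⟨v, hVE hv⟩,
          hTS⟩ : ↥(Ct ⊔ E))
          = ∑ g ∈ Gfin, PVGalois.res (Ct ⊔ E) g ⟨(c : M), SetLike.le_def.mp le_sup_left c.2⟩
              * PVGalois.res (Ct ⊔ E) g ⟨v, hVE hv⟩ := by
        apply Subtype.ext
        rw [coe_sum]
        refine Finset.sum_congr rfl (fun g hg => ?_)
        have hgS := hGmem g ((hmemGfin g).mp hg)
        calc g ⟨(c : M), SetLike.le_def.mp le_sup_left c.2⟩ * g ⟨v, hVE hv⟩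
            = (PVGalois.res (Ct ⊔ E) g ⟨(c : M), SetLike.le_def.mp le_sup_left c.2⟩ : M)
              * (PVGalois.res (Ct ⊔ E) g ⟨v, hVE hv⟩ : M) := by
              rw [PVGalois.res_coe _ g hgS, PVGalois.res_coe _ g hgS]
          _ = ((PVGalois.res (Ct ⊔ E) g ⟨(c : M), SetLike.le_def.mp le_sup_left c.2⟩
              * PVGalois.res (Ct ⊔ E) g ⟨v, hVE hv⟩ : ↥(Ct ⊔ E)) : M) := rfl
      rw [hrep, map_sum]
      have hterm : ∀ g ∈ Gfin,
          h (PVGalois.res (Ct ⊔ E) g ⟨(c : M), SetLike.le_def.mp le_sup_left c.2⟩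
            * PVGalois.res (Ct ⊔ E) g ⟨v, hVE hv⟩)
          = PVGalois.cmp (Ct ⊔ E) h g ⟨(c : M), SetLike.le_def.mp le_sup_left c.2⟩
            * PVGalois.cmp (Ct ⊔ E) h g ⟨v, hVE hv⟩ := by
        intro g hg
        have hgS := hGmem g ((hmemGfin g).mp hg)
        rw [map_mul, PVGalois.res_apply _ g hgS, PVGalois.res_apply _ g hgS,
          PVGalois.cmp_apply _ h g hgS, PVGalois.cmp_apply _ h g hgS]
      rw [Finset.sum_congr rfl hterm]
      exact sum_reindex h hh
        (fun g => g ⟨(c : M), SetLike.le_def.mp le_sup_left c.2⟩ * g ⟨v, hVE hv⟩)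
    have hrel : ∀ c : ↥Ct,
        ∑ i ∈ Gfin.attach, (χ i c) * (L (i.1 ⟨v, hVE hv⟩)) = 0 := by
      intro c
      have hTmem : (∑ g ∈ Gfin, g ⟨(c : M), SetLike.le_def.mp le_sup_left c.2⟩
          * g ⟨v, hVE hv⟩) ∈ W := by
        refine Submodule.subset_span ⟨hTV c, ?_⟩
        intro h hh
        exact hTfix c h hh _
      have hL0 : L (∑ g ∈ Gfin, g ⟨(c : M), SetLike.le_def.mp le_sup_left c.2⟩
          * g ⟨v, hVE hv⟩) = 0 := by
        rw [hLdef]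
        rw [LinearMap.comp_apply]
        have hq : W.mkQ (∑ g ∈ Gfin, g ⟨(c : M), SetLike.le_def.mp le_sup_left c.2⟩
            * g ⟨v, hVE hv⟩) = 0 := (Submodule.Quotient.mk_eq_zero W).mpr hTmem
        rw [hq, map_zero]
      have hTattach : (∑ g ∈ Gfin, g ⟨(c : M), SetLike.le_def.mp le_sup_left c.2⟩
          * g ⟨v, hVE hv⟩)
          = ∑ i ∈ Gfin.attach, (χ i c) • (i.1 ⟨v, hVE hv⟩) := by
        rw [← Finset.sum_attach Gfin
          (fun g => g ⟨(c : M), SetLike.le_def.mp le_sup_left c.2⟩ * g ⟨v, hVE hv⟩)]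
        exact Finset.sum_congr rfl (fun i _ => rfl)
      rw [hTattach] at hL0
      rw [map_sum] at hL0
      have hsm : ∀ i ∈ Gfin.attach, L ((χ i c) • (i.1 ⟨v, hVE hv⟩))
          = (χ i c) * (L (i.1 ⟨v, hVE hv⟩)) := by
        intro i _
        rw [map_smul, smul_eq_mul]
      rw [Finset.sum_congr rfl hsm] at hL0
      exact hL0
    have hall : ∀ i : {g : ↥(Ct ⊔ E) →+* M // g ∈ Gfin}, L (i.1 ⟨v, hVE hv⟩) = 0 := by
      apply Fintype.linearIndependent_iff.mp hli (fun i => L (i.1 ⟨v, hVE hv⟩))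
      funext c
      rw [Finset.sum_apply]
      have hc : ∀ i ∈ (Finset.univ : Finset {g : ↥(Ct ⊔ E) →+* M // g ∈ Gfin}),
          (L (i.1 ⟨v, hVE hv⟩) • ⇑(χ i)) c = (χ i c) * (L (i.1 ⟨v, hVE hv⟩)) := by
        intro i _
        rw [Pi.smul_apply, smul_eq_mul, mul_comm]
      rw [Finset.sum_congr rfl hc]
      rw [Finset.univ_eq_attach]
      exact hrel c
    have hid := hall ⟨(Ct ⊔ E).subtype, (hmemGfin _).mpr hGone⟩
    apply hφv
    have hsub : (Ct ⊔ E).subtype ⟨v, hVE hv⟩ = v := rfl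
    rw [hsub] at hid
    rw [hLdef, LinearMap.comp_apply] at hid
    exact hid
  refine ⟨hKE, hVGE, hEdc, ?_⟩
  intro F₀ hKF₀ hVGF₀ hF₀dc
  intro x hx
  have hKF : K ≤ F₀ ⊓ E := le_inf hKF₀ hKE
  have hFE : F₀ ⊓ E ≤ E := inf_le_right
  have hFdc : DiffClosed D (F₀ ⊓ E) := fun z hz => ⟨hF₀dc z hz.1, hEdc z hz.2⟩
  have hVGF : {y : M | ∃ hy : y ∈ V, ∀ g ∈ G, g ⟨y, hVE hy⟩ = y} ⊆ ((F₀ ⊓ E : Subfield M) : Set M) :=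
    fun y hy => ⟨hVGF₀ hy, hVGE hy⟩
  have hmulCt : ∀ (c : ↥Ct) (z : M), z ∈ Submodule.span ↥(F₀ ⊓ E) ((Ct : Set M)) →
      (c : M) * z ∈ Submodule.span ↥(F₀ ⊓ E) ((Ct : Set M)) := by
    intro c z hz
    induction hz using Submodule.span_induction with
    | mem u hu => exact Submodule.subset_span (mul_mem c.2 hu)
    | zero => rw [mul_zero]; exact zero_mem _
    | add a b _ _ ha hb => rw [mul_add]; exact add_mem ha hb
    | smul f u _ hu =>
      have he : (c : M) * (f • u) = f • ((c : M) * u) := by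
        show (c : M) * ((f : M) * u) = (f : M) * ((c : M) * u)
        ring
      rw [he]
      exact Submodule.smul_mem _ _ hu
  have hVF : ∀ v, v ∈ V → v ∈ Submodule.span ↥(F₀ ⊓ E) ((Ct : Set M)) := by
    intro v hv
    have h1 := hVspan v hv
    clear hv
    induction h1 using Submodule.span_induction with
    | mem w hw =>
      have hwF : w ∈ F₀ ⊓ E := hVGF hw
      have he : w = (⟨w, hwF⟩ : ↥(F₀ ⊓ E)) • (1 : M) := (mul_one w).symm
      rw [he]
      exact Submodule.smul_mem _ _ (Submodule.subset_span (one_mem Ct))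
    | zero => exact zero_mem _
    | add a b _ _ ha hb => exact add_mem ha hb
    | smul c z _ hz => exact hmulCt c z hz
  have hsupF : Ct ⊔ E ≤ Ct ⊔ (F₀ ⊓ E) := by
    refine hgen.2.2.2 (Ct ⊔ (F₀ ⊓ E)) ?_ ?_ ?_
    · exact sup_le le_sup_left (hKF.trans le_sup_right)
    · intro v hv
      exact span_subset (F₀ ⊓ E) v (hVF v hv)
    · exact supDiff (F₀ ⊓ E) hKF hFdc
  have hxF : x ∈ Ct ⊔ (F₀ ⊓ E) := hsupF (SetLike.le_def.mp le_sup_right hx)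
  have hxspan : x ∈ Submodule.span ↥(F₀ ⊓ E) ((Ct : Set M)) := by
    have h2 : x ∈ ((Ct ⊔ (F₀ ⊓ E) : Subfield M) : Set M) := hxF
    rw [spanEq (F₀ ⊓ E) hKF hFdc] at h2
    exact h2
  have hxfix : ∀ g ∈ G, g ⟨x, SetLike.le_def.mp le_sup_right hx⟩ = x :=
    fun g hg => hGfix g hg ⟨x, SetLike.le_def.mp le_sup_right hx⟩ hx
  have hxFE := reyn (F₀ ⊓ E) hKF hFE x hxspan (SetLike.le_def.mp le_sup_right hx) hxfix
  exact hxFE.1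
end
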